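/- arXiv:1410.6174 — 3 statements merged into one kernel-verified Lean document; each statement's English description precedes it below -/
import Mathlib

section
/- For every integer k ≥ 2, every r ∈ {1, …, k−1}, every τ in the upper half-plane and every u ∈ ℂ, one has ĥ_{k,r}(τ; u) + (−1)^{r+1} ĥ_{k,r}(τ; u+1) = (2/√(−iτ)) · Σ_{p=1}^{k−1} Ŝ^{(k)}_{r,p} · e^{iπk(u+p/k)²/(2τ)}, where √(−iτ) is the principal square root. -/
noncomputable section

open Complex MeasureTheory Matrix

namespace DSLST

/-- Dedekind eta function. -/
def eta (τ : ℂ) : ℂ :=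
  Complex.exp (2 * (Real.pi : ℂ) * Complex.I * τ / 24) *
    ∏' n : ℕ, (1 - Complex.exp (2 * (Real.pi : ℂ) * Complex.I * τ * ((n : ℂ) + 1)))

/-- Jacobi theta function θ_{ab}(τ; z). -/
def theta (a b : ℤ) (τ z : ℂ) : ℂ :=
  ∑' n : ℤ, Complex.exp ((Real.pi : ℂ) * Complex.I * τ * ((n : ℂ) + (a : ℂ) / 2) ^ 2
    + 2 * (Real.pi : ℂ) * Complex.I * (z + (b : ℂ) / 2) * ((n : ℂ) + (a : ℂ) / 2))

/-- Level-k theta ϑ_{k,r}(τ; z). -/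
def thetaLvl (k r : ℤ) (τ z : ℂ) : ℂ :=
  ∑' n : ℤ, Complex.exp
    (2 * (Real.pi : ℂ) * Complex.I * τ * ((r : ℂ) + 2 * (k : ℂ) * (n : ℂ)) ^ 2 / (4 * (k : ℂ))
      + 2 * (Real.pi : ℂ) * Complex.I * z * ((r : ℂ) + 2 * (k : ℂ) * (n : ℂ)))

/-- ϑ̂_{k,r} = ϑ_{k,r} − ϑ_{k,−r}. -/
def thetaHat (k r : ℤ) (τ z : ℂ) : ℂ := thetaLvl k r τ z - thetaLvl k (-r) τ z

/-- Affine SU(2) character at level k−2: χ^{(k−2)}_{l−1}(τ; z) = i ϑ̂_{k,l}(τ; z/2)/θ₁₁(τ; z). -/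
def chi (k l : ℤ) (τ z : ℂ) : ℂ :=
  Complex.I * thetaHat k l τ (z / 2) / theta 1 1 τ z

/-- N=2 minimal model character C^{m,k}_r[0,0]. -/
def C00 (k m r : ℤ) (τ z : ℂ) : ℂ :=
  if (m - r) % 2 = 0 then
    Complex.I *
      Complex.exp (2 * (Real.pi : ℂ) * Complex.I * τ *
        (((m : ℂ) + 1) ^ 2 - (r : ℂ) ^ 2 - (k : ℂ) ^ 2) / (4 * (k : ℂ))) *
      Complex.exp (2 * (Real.pi : ℂ) * Complex.I * z * (r : ℂ) / (k : ℂ)) *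
      theta 0 0 τ z * theta 1 1 ((k : ℂ) * τ) (((m : ℂ) + 1) * τ) * eta ((k : ℂ) * τ) ^ 3 /
      (theta 1 0 ((k : ℂ) * τ) (z - ((m : ℂ) + 1 + (r : ℂ)) * τ / 2) *
        theta 1 0 ((k : ℂ) * τ) (z + ((m : ℂ) + 1 - (r : ℂ)) * τ / 2) * eta τ ^ 3)
  else 0

/-- N=2 minimal model character C^{m,k}_r[1,1]. -/
def C11 (k m r : ℤ) (τ z : ℂ) : ℂ :=
  - Complex.exp (2 * (Real.pi : ℂ) * Complex.I * τ * (-((k : ℂ) - 2)) / (8 * (k : ℂ))) *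
    Complex.exp (2 * (Real.pi : ℂ) * Complex.I * (z + τ / 2 + 1 / 2) * ((k : ℂ) - 2) / (2 * (k : ℂ))) *
    Complex.exp (-(Real.pi : ℂ) * Complex.I * (r : ℂ) / (k : ℂ)) *
    C00 k m (r + 1) τ (z + τ / 2 + 1 / 2)

/-- Multivariable Appell–Lerch sum μ^{k,j,j'}(τ; v, u, w). -/
def mu (k j j' : ℤ) (τ v u w : ℂ) : ℂ :=
  Complex.exp (2 * (Real.pi : ℂ) * Complex.I * v * (j' : ℂ) / (k : ℂ)) / theta 1 1 τ u *
    ∑' n : ℤ,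
      Complex.exp (2 * (Real.pi : ℂ) * Complex.I * τ * ((n : ℂ) ^ 2 + (j' : ℂ) * (n : ℂ)) / (k : ℂ)) /
          (1 - Complex.exp (2 * (Real.pi : ℂ) * Complex.I * (v + (n : ℂ) * τ))) *
        Complex.exp (2 * (Real.pi : ℂ) * Complex.I * (n : ℂ) *
          (u + (1 - 2 / (k : ℂ)) * w - (1 - 2 / (k : ℂ)) * v)) *
        C11 k (j - 1) (2 * n + j') τ (w - v)

/-- Membership in the lattice ℤτ + ℤ. -/
def inLat (τ z : ℂ) : Prop := ∃ m n : ℤ, z = (m : ℂ) * τ + (n : ℂ)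

/-- Ŝ^{(k)}_{r,r'} = √(2/k)·sin(πrr'/k). -/
def Shat (k r r' : ℤ) : ℂ :=
  ((Real.sqrt (2 / (k : ℝ)) * Real.sin (Real.pi * (r : ℝ) * (r' : ℝ) / (k : ℝ)) : ℝ) : ℂ)

/-- ĥ_{k,r}(τ; u). -/
def hhat (k r : ℤ) (τ u : ℂ) : ℂ :=
  Complex.I * ∫ x : ℝ,
    Complex.exp ((Real.pi : ℂ) * Complex.I * (k : ℂ) * τ * (x : ℂ) ^ 2 / 2) *
      Complex.exp (-(Real.pi : ℂ) * (k : ℂ) * u * (x : ℂ)) *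
      (1 / (1 - Complex.exp ((Real.pi : ℂ) * (x : ℂ) - (Real.pi : ℂ) * Complex.I * (r : ℂ) / (k : ℂ))) -
        1 / (1 - Complex.exp ((Real.pi : ℂ) * (x : ℂ) + (Real.pi : ℂ) * Complex.I * (r : ℂ) / (k : ℂ))))

/-- E(z) = 2∫₀^z e^{−πt²}dt. -/
def Efun (z : ℝ) : ℝ := 2 * ∫ t in (0 : ℝ)..z, Real.exp (-Real.pi * t ^ 2)

/-- A single term of the R̂ series. -/
def Rterm (k : ℤ) (τ u : ℂ) (n : ℤ) : ℂ :=
  ((Real.sign ((n : ℝ) + 1 / 2) -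
      Efun (((n : ℝ) + (k : ℝ) * u.im / τ.im) * Real.sqrt (τ.im / (k : ℝ))) : ℝ) : ℂ) *
    Complex.exp (-(Real.pi : ℂ) * Complex.I * (n : ℂ) ^ 2 * τ / (2 * (k : ℂ))
      - (Real.pi : ℂ) * Complex.I * (n : ℂ) * u)

/-- R̂_{k,r}(τ; u). -/
def Rhat (k r : ℤ) (τ u : ℂ) : ℂ :=
  (∑' m : ℤ, Rterm k τ u (r + 2 * k * m)) - ∑' m : ℤ, Rterm k τ u (-r + 2 * k * m)

/-- Wirtinger derivative ∂/∂ū. -/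
def dzbar (f : ℂ → ℂ) (u : ℂ) : ℂ :=
  (1 / 2) * ((fderiv ℝ f u) 1 + Complex.I * (fderiv ℝ f u) Complex.I)

/-- Ω^{(k,d)}_{r,r'}. -/
def Omega (k d r r' : ℤ) : ℂ :=
  if (r + r') % (2 * d) = 0 ∧ (r - r') % (2 * k / d) = 0 then 1 else 0

/-- Ω̂^{(k,d)}_{r,r'} = Ω^{(k,d)}_{r,r'} − Ω^{(k,d)}_{r,−r'}. -/
def OmegaHat (k d r r' : ℤ) : ℂ := Omega k d r r' - Omega k d r (-r')

/-- Completion μ̃^{k,j,j'}. -/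
def mutilde (k j j' : ℤ) (τ v u w : ℂ) : ℂ :=
  (1 / 2) * (mu k j j' τ v u w + mu k (k - j) (k - j') τ v u w) -
    (1 / 4) * (if (j - j') % 2 = 0 then (1 : ℂ) else 0) *
      (chi k j τ (u - v + w) * Rhat k j' τ (u - v + (1 - 2 / (k : ℂ)) * w) +
        chi k (k - j) τ (u - v + w) * Rhat k (k - j') τ (u - v + (1 - 2 / (k : ℂ)) * w))

/-- μ^{(k,d)} = Σ Ω̂ μ. -/
def muKD (k d : ℤ) (τ v u w : ℂ) : ℂ :=
  ∑ j ∈ Finset.Icc (1 : ℤ) (k - 1), ∑ j' ∈ Finset.Icc (1 : ℤ) (k - 1),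
    OmegaHat k d j j' * mu k j j' τ v u w

/-- μ̃^{(k,d)} = Σ Ω̂ μ̃. -/
def mutildeKD (k d : ℤ) (τ v u w : ℂ) : ℂ :=
  ∑ j ∈ Finset.Icc (1 : ℤ) (k - 1), ∑ j' ∈ Finset.Icc (1 : ℤ) (k - 1),
    OmegaHat k d j j' * mutilde k j j' τ v u w

/-- Weak Jacobi form φ_{−2,1}. -/
def phiM21 (τ z : ℂ) : ℂ := -(theta 1 1 τ z ^ 2) / eta τ ^ 6

/-- Weak Jacobi form φ_{0,1}. -/
def phi01 (τ z : ℂ) : ℂ :=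
  4 * (theta 1 0 τ z ^ 2 / theta 1 0 τ 0 ^ 2 + theta 0 0 τ z ^ 2 / theta 0 0 τ 0 ^ 2 +
    theta 0 1 τ z ^ 2 / theta 0 1 τ 0 ^ 2)

/-- B^{k,j,j'}_{ab}(τ; v,u,w). -/
def Bfun (k j j' a b : ℤ) (τ v u w : ℂ) : ℂ :=
  theta a b τ v * theta a b τ u / eta τ ^ 3 *
    mu k j j' τ (v + ((a : ℂ) - 1) * τ / 2 + ((b : ℂ) - 1) / 2)
      (u + ((a : ℂ) - 1) * τ / 2 + ((b : ℂ) - 1) / 2) w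

/-- B_{(k,d)}(τ; u). -/
def Bkd (k d : ℤ) (τ u : ℂ) : ℂ :=
  (1 / 2) * ((Real.sqrt ((k : ℝ) * τ.im) : ℝ) : ℂ) *
    Complex.exp (-(Real.pi : ℂ) * (k : ℂ) * (u.im : ℂ) ^ 2 / (τ.im : ℂ)) *
    ∑ r ∈ Finset.range (2 * k).toNat, ∑ r' ∈ Finset.range (2 * k).toNat,
      thetaHat k (r : ℤ) τ (u / 2) * (starRingEnd ℂ) (thetaHat k (r' : ℤ) τ (u / 2)) *
        Omega k d (r : ℤ) (r' : ℤ)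

/-- Fundamental domain {aτ + b : a, b ∈ [0,1)} of the torus E(τ). -/
def fundDom (τ : ℂ) : Set ℂ :=
  {z : ℂ | ∃ a b : ℝ, a ∈ Set.Ico (0 : ℝ) 1 ∧ b ∈ Set.Ico (0 : ℝ) 1 ∧ z = (a : ℂ) * τ + (b : ℂ)}

/-- ∫_{E(τ)} B_{(k,d)}(τ; u) du₁du₂/τ₂. -/
def torusInt (k d : ℤ) (τ : ℂ) : ℂ :=
  (1 / (τ.im : ℂ)) * ∫ u in fundDom τ, Bkd k d τ u

/-- The matrix S^{(k)} with indices in ℤ/2kℤ (represented by Fin (2k)). -/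
def Smat (k : ℕ) : Matrix (Fin (2 * k)) (Fin (2 * k)) ℂ :=
  Matrix.of fun r r' => (1 / ((Real.sqrt (2 * (k : ℝ)) : ℝ) : ℂ)) *
    Complex.exp (-(Real.pi : ℂ) * Complex.I * ((r : ℕ) : ℂ) * ((r' : ℕ) : ℂ) / (k : ℂ))

/-- The matrix T^{(k)}. -/
def Tmat (k : ℕ) : Matrix (Fin (2 * k)) (Fin (2 * k)) ℂ :=
  Matrix.of fun r r' => if r = r' then
    Complex.exp ((Real.pi : ℂ) * Complex.I * ((r : ℕ) : ℂ) ^ 2 / (2 * (k : ℂ))) else 0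

/-- The matrix Ω^{(k,d)}. -/
def OmatBig (k d : ℕ) : Matrix (Fin (2 * k)) (Fin (2 * k)) ℂ :=
  Matrix.of fun r r' => Omega (k : ℤ) (d : ℤ) ((r : ℕ) : ℤ) ((r' : ℕ) : ℤ)

/-- The matrix Ŝ^{(k)} on indices {1,…,k−1}. -/
def ShatMat (k : ℕ) : Matrix (Fin (k - 1)) (Fin (k - 1)) ℂ :=
  Matrix.of fun l l' => Shat (k : ℤ) (((l : ℕ) : ℤ) + 1) (((l' : ℕ) : ℤ) + 1)

/-- The matrix Ω̂^{(k,d)} on indices {1,…,k−1}. -/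
def OmatHat (k d : ℕ) : Matrix (Fin (k - 1)) (Fin (k - 1)) ℂ :=
  Matrix.of fun r r' => OmegaHat (k : ℤ) (d : ℤ) (((r : ℕ) : ℤ) + 1) (((r' : ℕ) : ℤ) + 1)

end DSLST
namespace DSLST

/-!
Shifting `u ↦ u + 1` multiplies the integrand of `ĥ_{k,r}` by `e^{-πkx}`. With `t = e^{πx}` and
`ω = e^{iπr/k}`, so that `ω^k = (-1)^r`, the bracket in the integrand is
`1/(1 - tω⁻¹) - 1/(1 - tω)`, and multiplying it by `1 - ω^k t^{-k}` truncates both geometric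
series in `t⁻¹`: the result is the finite sum `-2i Σ_{p<k} sin(πrp/k) t^{-p}`. So
`ĥ(u) + (-1)^{r+1} ĥ(u+1)` is a finite combination of Gaussian integrals
`∫ e^{iπkτx²/2 - πk(u + p/k)x} dx = √(2/k)/√(-iτ) · e^{iπk(u+p/k)²/(2τ)}`.
-/

open Finset
open scoped Real

theorem one_div_one_sub_eq_one_sub_one_div_one_sub_inv {K : Type*} [Field K] {a : K}
    (ha : a ≠ 0) (ha1 : a ≠ 1) : 1 / (1 - a) = 1 - 1 / (1 - a⁻¹) := by
  have h : 1 - a ≠ 0 := sub_ne_zero.mpr (Ne.symm ha1)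
  have h' : 1 - a⁻¹ ≠ 0 := sub_ne_zero.mpr (Ne.symm (inv_ne_one.mpr ha1))
  field_simp
  ring

theorem one_div_one_sub_mul_one_sub_pow {K : Type*} [Field K] {q : K} (hq : q ≠ 1) (n : ℕ) :
    1 / (1 - q) * (1 - q ^ n) = ∑ p ∈ range n, q ^ p := by
  have h : 1 - q ≠ 0 := sub_ne_zero.mpr (Ne.symm hq)
  rw [geom_sum_eq hq]
  field_simp
  ring

theorem one_div_one_sub_sub_one_div_one_sub_mul {K : Type*} [Field K] {a b : K} (n : ℕ)
    (ha : a ≠ 0) (ha1 : a ≠ 1) (hb : b ≠ 0) (hb1 : b ≠ 1) (hab : a⁻¹ ^ n = b⁻¹ ^ n) :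
    (1 / (1 - a) - 1 / (1 - b)) * (1 - a⁻¹ ^ n) =
      ∑ p ∈ range n, (b⁻¹ ^ p - a⁻¹ ^ p) := by
  rw [one_div_one_sub_eq_one_sub_one_div_one_sub_inv ha ha1,
    one_div_one_sub_eq_one_sub_one_div_one_sub_inv hb hb1, sum_sub_distrib,
    ← one_div_one_sub_mul_one_sub_pow (inv_ne_one.mpr ha1),
    ← one_div_one_sub_mul_one_sub_pow (inv_ne_one.mpr hb1), ← hab]
  ring

-- `‖1 - e^z‖² = sin² (Im z) + (e^{Re z} - cos (Im z))²`
theorem abs_sin_im_le_norm_one_sub_exp (z : ℂ) : |Real.sin z.im| ≤ ‖1 - cexp z‖ := by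
  have hre : (1 - cexp z).re = 1 - Real.exp z.re * Real.cos z.im := by simp [exp_re]
  have him : (1 - cexp z).im = -(Real.exp z.re * Real.sin z.im) := by simp [exp_im]
  rw [norm_def, normSq_apply, hre, him, ← Real.sqrt_sq_eq_abs]
  apply Real.sqrt_le_sqrt
  nlinarith [sq_nonneg (Real.exp z.re - Real.cos z.im), Real.sin_sq_add_cos_sq z.im]

theorem inv_cexp_pow (z : ℂ) (n : ℕ) : (cexp z)⁻¹ ^ n = cexp (-(n * z)) := by
  rw [← exp_neg, ← exp_nat_mul, mul_neg]

theorem exp_ne_one_of_sin_im_ne_zero {z : ℂ} (hz : Real.sin z.im ≠ 0) : cexp z ≠ 1 := by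
  intro h
  have := abs_sin_im_le_norm_one_sub_exp z
  rw [h, sub_self, norm_zero] at this
  exact hz (abs_nonpos_iff.mp this)

def hhatKernel (θ x : ℝ) : ℂ :=
  1 / (1 - cexp (π * x - θ * I)) - 1 / (1 - cexp (π * x + θ * I))

theorem hhat_eq_integral (k r : ℤ) (τ u : ℂ) :
    hhat k r τ u = I * ∫ x : ℝ, hhatKernel (π * r / k) x *
      cexp (π * I * k * τ / 2 * x ^ 2 + -(π * k * u) * x) := by
  unfold hhat hhatKernel
  congr 1
  refine integral_congr_ae (Filter.Eventually.of_forall fun x => ?_)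
  simp only [← exp_add]
  push_cast
  ring_nf

section Kernel

variable {θ : ℝ}

theorem norm_hhatKernel_le (hθ : Real.sin θ ≠ 0) (x : ℝ) :
    ‖hhatKernel θ x‖ ≤ 2 / |Real.sin θ| := by
  have bound : ∀ z : ℂ, |Real.sin z.im| = |Real.sin θ| →
      ‖1 / (1 - cexp z)‖ ≤ 1 / |Real.sin θ| := fun z hz => by
    rw [norm_div, norm_one, ← hz]
    exact one_div_le_one_div_of_le (hz ▸ abs_pos.mpr hθ) (abs_sin_im_le_norm_one_sub_exp z)
  calc ‖hhatKernel θ x‖ ≤ 1 / |Real.sin θ| + 1 / |Real.sin θ| :=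
        (norm_sub_le _ _).trans (add_le_add (bound _ (by simp)) (bound _ (by simp)))
    _ = 2 / |Real.sin θ| := by ring

theorem continuous_hhatKernel (hθ : Real.sin θ ≠ 0) : Continuous (hhatKernel θ) := by
  unfold hhatKernel
  refine .sub (.div continuous_const (by fun_prop) fun x => ?_)
    (.div continuous_const (by fun_prop) fun x => ?_) <;>
  exact sub_ne_zero.mpr (exp_ne_one_of_sin_im_ne_zero (by simpa using hθ)).symm

theorem integrable_hhatKernel_mul (hθ : Real.sin θ ≠ 0) {b : ℂ} (hb : b.re < 0) (c : ℂ) :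
    Integrable fun x : ℝ => hhatKernel θ x * cexp (b * x ^ 2 + c * x) := by
  have hg : Integrable fun x : ℝ => cexp (b * x ^ 2 + c * x) := by
    simpa using integrable_cexp_quadratic' hb c 0
  exact hg.bdd_mul (c := 2 / |Real.sin θ|)
    (continuous_hhatKernel hθ).aestronglyMeasurable
    (Filter.Eventually.of_forall (norm_hhatKernel_le hθ))

theorem hhatKernel_mul_one_sub (hθ : Real.sin θ ≠ 0) {n : ℕ} {m : ℤ}
    (hn : n * θ = m * π) (x : ℝ) :
    hhatKernel θ x * (1 - (-1) ^ m * cexp (-(π * n * x))) =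
      ∑ p ∈ range n, -(2 * I * Real.sin (p * θ)) * cexp (-(π * p * x)) := by
  have hnC : (n : ℂ) * θ = m * π := by exact_mod_cast hn
  have sign : ∀ s : ℤ,
      cexp (-(π * n * x) + s * (π * I)) = (-1) ^ s * cexp (-(π * n * x)) := fun s => by
    rw [exp_add, exp_int_mul, exp_pi_mul_I, mul_comm]
  have ha : (cexp (π * x - θ * I))⁻¹ ^ n = (-1) ^ m * cexp (-(π * n * x)) := by
    rw [inv_cexp_pow, ← sign]
    congr 1
    linear_combination I * hnC
  have hb : (cexp (π * x + θ * I))⁻¹ ^ n = (-1) ^ m * cexp (-(π * n * x)) := by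
    rw [inv_cexp_pow, ← neg_neg m, _root_.zpow_neg, ← _root_.inv_zpow, inv_neg_one, ← sign]
    congr 1
    push_cast
    linear_combination -I * hnC
  have hne : ∀ s : ℝ, Real.sin s ≠ 0 → cexp (π * x + s * I) ≠ 1 := fun s hs =>
    exp_ne_one_of_sin_im_ne_zero (by simpa using hs)
  unfold hhatKernel
  rw [← ha, one_div_one_sub_sub_one_div_one_sub_mul n (exp_ne_zero _)
    (by simpa [sub_eq_add_neg] using hne (-θ) (by simpa using hθ)) (exp_ne_zero _) (hne θ hθ)
    (ha.trans hb.symm)]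
  refine sum_congr rfl fun p _ => ?_
  have hplus :
      cexp (-(p * (π * x + θ * I))) = cexp (-(π * p * x)) * cexp (-↑(p * θ) * I) := by
    rw [← exp_add]; push_cast; ring_nf
  have hminus :
      cexp (-(p * (π * x - θ * I))) = cexp (-(π * p * x)) * cexp (↑(p * θ) * I) := by
    rw [← exp_add]; push_cast; ring_nf
  rw [inv_cexp_pow, inv_cexp_pow, hplus, hminus, ofReal_sin, Complex.sin]
  linear_combination
    (cexp (-(π * p * x)) * (cexp (-↑(p * θ) * I) - cexp (↑(p * θ) * I))) * I_sq

theorem I_mul_integral_hhatKernel_mul_sub (hθ : Real.sin θ ≠ 0) {n : ℕ} {m : ℤ}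
    (hn : n * θ = m * π) {b : ℂ} (hb : b.re < 0) (c : ℂ) :
    I * ((∫ x : ℝ, hhatKernel θ x * cexp (b * x ^ 2 + c * x)) -
        (-1) ^ m * ∫ x : ℝ, hhatKernel θ x * cexp (b * x ^ 2 + (c - π * n) * x)) =
      2 * ∑ p ∈ range n,
        Real.sin (p * θ) * ∫ x : ℝ, cexp (b * x ^ 2 + (c - π * p) * x) := by
  have hg : ∀ c' : ℂ, Integrable fun x : ℝ => cexp (b * x ^ 2 + c' * x) := fun c' => by
    simpa using integrable_cexp_quadratic' hb c' 0
  rw [← integral_const_mul, ← integral_sub (integrable_hhatKernel_mul hθ hb c)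
    ((integrable_hhatKernel_mul hθ hb _).const_mul _), ← integral_const_mul]
  simp_rw [mul_sum, ← integral_const_mul]
  rw [← integral_finsetSum _ fun p _ => ((hg _).const_mul _).const_mul _]
  congr 1
  funext x
  have shift : ∀ s : ℂ,
      cexp (b * x ^ 2 + (c - π * s) * x) = cexp (-(π * s * x)) * cexp (b * x ^ 2 + c * x) :=
    fun s => by rw [← exp_add]; ring_nf
  simp_rw [shift]
  calc _ = I * (hhatKernel θ x * (1 - (-1) ^ m * cexp (-(π * n * x)))) *
        cexp (b * x ^ 2 + c * x) := by ring
    _ = _ := by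
        rw [hhatKernel_mul_one_sub hθ hn, mul_sum, sum_mul]
        refine sum_congr rfl fun p _ => ?_
        linear_combination
          (-2 * Real.sin (p * θ) * cexp (-(π * p * x)) * cexp (b * x ^ 2 + c * x)) * I_sq

end Kernel

theorem ofReal_mul_cpow {a : ℝ} (ha : 0 < a) {z : ℂ} (hz : z ≠ 0) (w : ℂ) :
    ((a : ℂ) * z) ^ w = (a : ℂ) ^ w * z ^ w := by
  have ha' : (a : ℂ) ≠ 0 := ofReal_ne_zero.mpr ha.ne'
  rw [cpow_def_of_ne_zero (mul_ne_zero ha' hz), log_ofReal_mul ha hz, cpow_def_of_ne_zero ha',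
    cpow_def_of_ne_zero hz, ofReal_log ha.le, add_mul, exp_add]

theorem re_pi_mul_I_mul_mul_div_two_neg {k : ℝ} (hk : 0 < k) {τ : ℂ} (hτ : 0 < τ.im) :
    (π * I * k * τ / 2 : ℂ).re < 0 := by
  have : (π * I * k * τ / 2 : ℂ).re = -(π * k / 2 * τ.im) := by simp; ring
  rw [this, neg_lt_zero]
  positivity

theorem integral_cexp_half_pi_I_quadratic {k : ℝ} (hk : 0 < k) {τ : ℂ} (hτ : 0 < τ.im)
    (w : ℂ) :
    ∫ x : ℝ, cexp (π * I * k * τ / 2 * x ^ 2 + -(π * k * w) * x) =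
      √(2 / k) / (-I * τ) ^ (1 / 2 : ℂ) * cexp (π * I * k * w ^ 2 / (2 * τ)) := by
  have hτ0 : τ ≠ 0 := by rintro rfl; simp at hτ
  have harg : (-I * τ).arg ≠ π := by
    rw [Ne, arg_eq_pi_iff]
    simp only [neg_mul, neg_re, mul_re, I_re, zero_mul, I_im, one_mul, zero_sub, neg_neg,
      neg_im, mul_im, zero_add, neg_eq_zero, not_and]
    exact fun h => absurd h (not_lt.mpr hτ.le)
  have hpre : (π / -(π * I * k * τ / 2) : ℂ) = ((2 / k : ℝ) : ℂ) * (-I * τ)⁻¹ := by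
    push_cast
    field_simp
  have hsqrt : (((2 / k : ℝ) : ℂ)) ^ (1 / 2 : ℂ) = √(2 / k) := by
    rw [Real.sqrt_eq_rpow, ofReal_cpow (by positivity)]
    push_cast
    rfl
  have h := integral_cexp_quadratic (re_pi_mul_I_mul_mul_div_two_neg hk hτ) (-(π * k * w)) 0
  simp only [add_zero, zero_sub] at h
  rw [h, hpre, ofReal_mul_cpow (by positivity) (inv_ne_zero (by simpa using hτ0)),
    inv_cpow _ _ harg, hsqrt, div_eq_mul_inv]
  congr 2
  field_simp
  linear_combination -4 * (k : ℂ) * w ^ 2 * I_sq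

theorem sum_Icc_one_sub_one_eq_sum_range {M : Type*} [AddCommMonoid M] (n : ℕ) {f : ℤ → M}
    (hf : f 0 = 0) : ∑ p ∈ Icc (1 : ℤ) (n - 1), f p = ∑ p ∈ range n, f p := by
  rw [sum_subset (Icc_subset_Icc (by norm_num : (0 : ℤ) ≤ 1) le_rfl) fun p hp hp1 => by
    rw [show p = 0 by grind, hf]]
  exact sum_nbij' (fun p => p.toNat) (fun p => p) (by grind) (by grind) (by grind) (by grind)
    (by grind)

theorem sin_pi_mul_div_pos {r k : ℝ} (hr : 0 < r) (hrk : r < k) : 0 < Real.sin (π * r / k) := by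
  refine Real.sin_pos_of_pos_of_lt_pi (div_pos (mul_pos Real.pi_pos hr) (hr.trans hrk)) ?_
  rw [div_lt_iff₀ (hr.trans hrk)]
  exact mul_lt_mul_of_pos_left hrk Real.pi_pos

theorem two_div_mul_sum_Shat_mul_cexp {k : ℕ} (hk : (0 : ℝ) < k) {τ : ℂ} (hτ : 0 < τ.im)
    (r : ℤ) (u : ℂ) :
    2 / (-I * τ) ^ (1 / 2 : ℂ) *
        ∑ p ∈ range k, Shat k r p * cexp (π * I * k * (u + p / k) ^ 2 / (2 * τ)) =
      2 * ∑ p ∈ range k, Real.sin (p * (π * r / k)) *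
        ∫ x : ℝ, cexp (π * I * k * τ / 2 * x ^ 2 + (-(π * k * u) - π * p) * x) := by
  have hkC : (k : ℂ) ≠ 0 := by exact_mod_cast hk.ne'
  rw [mul_sum, mul_sum]
  refine sum_congr rfl fun p _ => ?_
  have hw : -(π * k * u) - π * p = -(π * k * (u + p / k) : ℂ) := by field_simp; ring
  have hg := integral_cexp_half_pi_I_quadratic hk hτ (u + p / k)
  simp only [ofReal_natCast] at hg
  rw [hw, hg, Shat, Int.cast_natCast, Int.cast_natCast, ofReal_mul,
    show π * r * p / k = p * (π * r / k) by ring]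
  ring

/-- Proposition: ĥ_{k,r}(τ; u) + (−1)^{r+1} ĥ_{k,r}(τ; u+1)
    = (2/√(−iτ)) Σ_{p=1}^{k−1} Ŝ^{(k)}_{r,p} e^{iπk(u+p/k)²/(2τ)}. -/
theorem hhat_shift_one (k : ℤ) (hk : 2 ≤ k) (r : ℤ) (hr1 : 1 ≤ r) (hr2 : r ≤ k - 1)
    (τ : ℂ) (hτ : 0 < τ.im) (u : ℂ) :
    hhat k r τ u + (-1 : ℂ) ^ (r + 1) * hhat k r τ (u + 1) =
      2 / ((-Complex.I * τ) ^ ((1 : ℂ) / 2)) *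
        ∑ p ∈ Finset.Icc (1 : ℤ) (k - 1),
          Shat k r p *
            Complex.exp ((Real.pi : ℂ) * Complex.I * (k : ℂ) * (u + (p : ℂ) / (k : ℂ)) ^ 2 /
              (2 * τ)) := by
  lift k to ℕ using (by omega)
  have hk0 : (0 : ℝ) < k := by exact_mod_cast (by omega : 0 < k)
  have hθ : Real.sin (π * r / k) ≠ 0 :=
    (sin_pi_mul_div_pos (by exact_mod_cast hr1) (by exact_mod_cast (by omega : r < k))).ne'
  have hkθ : (k : ℝ) * (π * r / k) = r * π := by field_simp
  have hb : (π * I * k * τ / 2 : ℂ).re < 0 := by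
    exact_mod_cast re_pi_mul_I_mul_mul_div_two_neg hk0 hτ
  rw [hhat_eq_integral, hhat_eq_integral, sum_Icc_one_sub_one_eq_sum_range k (by simp [Shat])]
  simp only [Int.cast_natCast]
  rw [two_div_mul_sum_Shat_mul_cexp hk0 hτ, ← I_mul_integral_hhatKernel_mul_sub hθ hkθ hb,
    show -(π * k * (u + 1) : ℂ) = -(π * k * u) - π * k by ring, zpow_add_one₀ (by norm_num)]
  ring
end DSLST
end
end

section
/- Fix an integer k ≥ 2 and τ in the upper half-plane. Suppose f_1, …, f_{k−1} : ℂ → ℂ are entire functions satisfying, for all u ∈ ℂ and all r ∈ {1, …, k−1}: (i) f_r(u) − (−1)^r f_r(u+1) = 0, and (ii) f_r(u) + e^{−πiku − πikτ/2} f_{k−r}(u+τ) = 0. Then f_r is identically zero for every r. (Consequently the functions ĥ_{k,r} are the unique entire functions of u satisfying their two functional equations.) -/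
noncomputable section

open Complex MeasureTheory Matrix

/-!
Using (i) twice, `f r` has period `2`; using (ii) for `r` and then for `k - r`,
`f r (u + 2τ) = e^{2πik(u + τ)} f r u`. Hence `‖f r u‖ · exp (πk (Im u)² / (2 Im τ))` is continuous
and doubly periodic, so bounded; thus `f r` is bounded, hence constant by Liouville, and the
constant `c = e^{2πikτ} c` with `|e^{2πikτ}| < 1` is zero.
-/

namespace DSLST

open Function Real

lemma bddAbove_range_of_periodic_of_periodic {h : ℂ → ℝ} (hh : Continuous h) {p : ℝ} (hp : 0 < p)
    {T : ℂ} (hT : 0 < T.im) (h₁ : Periodic h p) (h₂ : Periodic h T) : BddAbove (Set.range h) := by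
  let φ : ℝ × ℝ → ℝ := fun x => h (x.1 + x.2 * T)
  obtain ⟨C, hC⟩ := (isCompact_Icc (a := 0) (b := p)).prod (isCompact_Icc (a := (0 : ℝ)) (b := 1))
    |>.bddAbove_image (f := φ) (by fun_prop)
  refine ⟨C, ?_⟩
  rintro _ ⟨v, rfl⟩
  have hv : v = ((v.re - v.im / T.im * T.re : ℝ) : ℂ) + ((v.im / T.im : ℝ) : ℂ) * T := by
    apply Complex.ext
    · simp
    · simp [hT.ne']
  have hφ₁ (b : ℝ) : Periodic (fun a : ℝ => φ (a, b)) p := fun a => by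
    simp only [φ, ofReal_add]
    rw [add_right_comm]
    exact h₁ _
  have hφ₂ (a : ℝ) : Periodic (fun b : ℝ => φ (a, b)) 1 := fun b => by
    simp only [φ, ofReal_add, ofReal_one, add_mul, one_mul, ← add_assoc]
    exact h₂ _
  obtain ⟨a, ha, hφa⟩ := (hφ₁ _).exists_mem_Ico₀ hp (v.re - v.im / T.im * T.re)
  obtain ⟨b, hb, hφb⟩ := (hφ₂ a).exists_mem_Ico₀ one_pos (v.im / T.im)
  calc h v = φ (a, b) := by rw [hv]; exact hφa.trans hφb
    _ ≤ C := hC ⟨(a, b), ⟨Set.Ico_subset_Icc_self ha, Set.Ico_subset_Icc_self hb⟩, rfl⟩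

/- The Gaussian factor absorbs the multiplier: `|exp (2πic(v + T/2))| = exp (-2πc(Im v + Im T/2))`
and `(Im v + Im T)² - (Im v)² = 2 Im T (Im v + Im T/2)`. -/
lemma norm_mul_exp_periodic {g : ℂ → ℂ} {T : ℂ} (hT : 0 < T.im) {c : ℝ}
    (hg : ∀ v, g (v + T) = exp (2 * π * I * c * (v + T / 2)) * g v) :
    Periodic (fun v => ‖g v‖ * Real.exp (π * c * v.im ^ 2 / T.im)) T := by
  intro v
  have hre : (2 * π * I * c * (v + T / 2)).re = -(2 * π * c * (v.im + T.im / 2)) := by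
    simp [Complex.mul_re, Complex.mul_im]
  simp only
  rw [hg, norm_mul, Complex.norm_exp, hre, add_im, mul_comm (rexp _), mul_assoc,
    ← Real.exp_add]
  congr 2
  field_simp
  ring

theorem eq_zero_of_periodic_of_quasiperiodic {g : ℂ → ℂ} (hg : Differentiable ℂ g) {p : ℝ}
    (hp : 0 < p) {T : ℂ} (hT : 0 < T.im) {c : ℝ} (hc : 0 < c) (h₁ : Periodic g p)
    (h₂ : ∀ v, g (v + T) = exp (2 * π * I * c * (v + T / 2)) * g v) : g = 0 := by
  obtain ⟨C, hC⟩ := bddAbove_range_of_periodic_of_periodic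
    (h := fun v => ‖g v‖ * Real.exp (π * c * v.im ^ 2 / T.im))
    (hg.continuous.norm.mul (by fun_prop)) hp hT
    (fun v => by simp only [h₁ v, add_im, ofReal_im, add_zero]) (norm_mul_exp_periodic hT h₂)
  have hbdd : ∀ v, ‖g v‖ ≤ C := fun v =>
    (le_mul_of_one_le_right (norm_nonneg _) (Real.one_le_exp (by positivity))).trans
      (hC ⟨v, rfl⟩)
  have hconst : ∀ v, g v = g 0 := fun v => hg.apply_eq_apply_of_bounded
    (isBounded_iff_forall_norm_le.2 ⟨C, by rintro _ ⟨w, rfl⟩; exact hbdd w⟩) v 0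
  have hmul_lt_one : ‖exp (2 * π * I * c * (0 + T / 2))‖ < 1 := by
    rw [Complex.norm_exp, Real.exp_lt_one_iff]
    simp [Complex.mul_re, Complex.mul_im]
    positivity
  have hfix : ‖g 0‖ = ‖exp (2 * π * I * c * (0 + T / 2))‖ * ‖g 0‖ := by
    rw [← norm_mul, ← h₂ 0, zero_add, hconst T]
  have h0 : ‖g 0‖ = 0 := by nlinarith [norm_nonneg (g 0)]
  funext v
  rw [hconst v, norm_eq_zero.1 h0, Pi.zero_apply]

lemma periodic_two_of_sub_neg_one_zpow_mul {g : ℂ → ℂ} {r : ℤ}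
    (h : ∀ u, g u - (-1 : ℂ) ^ r * g (u + 1) = 0) : Periodic g 2 := by
  intro u
  have hsq : (-1 : ℂ) ^ r * (-1 : ℂ) ^ r = 1 := by rw [← mul_zpow]; norm_num
  have h₁ := h (u + 1)
  rw [add_assoc, one_add_one_eq_two] at h₁
  linear_combination -h u - (-1 : ℂ) ^ r * h₁ - g (u + 2) * hsq

lemma apply_add_two_mul_eq_exp_mul {g g' : ℂ → ℂ} {k τ : ℂ}
    (h : ∀ u, g u + exp (-π * I * k * u - π * I * k * τ / 2) * g' (u + τ) = 0)
    (h' : ∀ u, g' u + exp (-π * I * k * u - π * I * k * τ / 2) * g (u + τ) = 0) (v : ℂ) :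
    g (v + 2 * τ) = exp (2 * π * I * k * (v + 2 * τ / 2)) * g v := by
  have h₂ := h' (v + τ)
  rw [add_assoc, ← two_mul] at h₂
  have hinv : exp (2 * π * I * k * (v + 2 * τ / 2)) * exp (-π * I * k * v - π * I * k * τ / 2) *
      exp (-π * I * k * (v + τ) - π * I * k * τ / 2) = 1 := by
    rw [← Complex.exp_add, ← Complex.exp_add, ← Complex.exp_zero]
    congr 1
    ring
  linear_combination exp (2 * π * I * k * (v + 2 * τ / 2)) *
      exp (-π * I * k * v - π * I * k * τ / 2) * h₂ -
    exp (2 * π * I * k * (v + 2 * τ / 2)) * h v - g (v + 2 * τ) * hinv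

/-- Uniqueness: entire functions satisfying the two functional equations of ĥ_{k,r}
    with vanishing right-hand sides are identically zero. -/
theorem entire_functional_eq_unique (k : ℤ) (hk : 2 ≤ k) (τ : ℂ) (hτ : 0 < τ.im)
    (f : ℤ → ℂ → ℂ)
    (hdiff : ∀ r : ℤ, 1 ≤ r → r ≤ k - 1 → Differentiable ℂ (f r))
    (h1 : ∀ r : ℤ, 1 ≤ r → r ≤ k - 1 → ∀ u : ℂ, f r u - (-1 : ℂ) ^ r * f r (u + 1) = 0)
    (h2 : ∀ r : ℤ, 1 ≤ r → r ≤ k - 1 → ∀ u : ℂ,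
      f r u + Complex.exp (-(Real.pi : ℂ) * Complex.I * (k : ℂ) * u -
          (Real.pi : ℂ) * Complex.I * (k : ℂ) * τ / 2) * f (k - r) (u + τ) = 0) :
    ∀ r : ℤ, 1 ≤ r → r ≤ k - 1 → ∀ u : ℂ, f r u = 0 := by
  intro r hr₁ hr₂ u
  have hswap := h2 (k - r) (by omega) (by omega)
  rw [sub_sub_cancel] at hswap
  have hquasi := apply_add_two_mul_eq_exp_mul (h2 r hr₁ hr₂) hswap
  have hzero := eq_zero_of_periodic_of_quasiperiodic (hdiff r hr₁ hr₂) two_pos (T := 2 * τ)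
    (by simpa using hτ) (c := k) (by exact_mod_cast (by omega : (0 : ℤ) < k))
    (by exact_mod_cast periodic_two_of_sub_neg_one_zpow_mul (h1 r hr₁ hr₂))
    (by exact_mod_cast hquasi)
  exact congrFun hzero u

end DSLST
end
end

section
/- For every integer k ≥ 2, every r ∈ {1, …, k−1}, every τ in the upper half-plane and every u ∈ ℂ: (a) R̂_{k,r}(τ; u) = R̂_{k,r}(τ; −u); (b) R̂_{k,r}(τ; u) + (−1)^{r+1} R̂_{k,r}(τ; u+1) = 0; (c) R̂_{k,r}(τ; u) + e^{−πiku − πikτ/2} R̂_{k,k−r}(τ; u+τ) = 2 e^{−πiru − πir²τ/(2k)}. -/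
noncomputable section

open Complex MeasureTheory Matrix

/-!
Parts (a) and (b) are reindexings of the two lattice sums: negating `u` negates each summand
up to `n ↦ -n` (because `sgn` and `E` are odd and `n = ±r + 2km` is never `0`), and `u ↦ u + 1`
multiplies the summand `n` by `(-1)ⁿ`. For (c), shifting `u ↦ u + τ` together with `n ↦ n - k`
leaves the argument of `E` and, after the factor `e^{-πiku - πikτ/2}`, the exponential unchanged,
so only the signs differ: `sgn(n + 1/2) - sgn(n - k + 1/2)` is `2` on `0 ≤ n < k` and `0`
elsewhere, and the only such `n` in `±r + 2kℤ` is `n = r`. The term-by-term subtraction needs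
absolute convergence, which holds because `|sgn(n + 1/2) - E(x)| ≤ e^{-πx²}` turns each summand
into a Gaussian in `n`, dominated by a Jacobi theta term.
-/

namespace DSLST

open Real Set Filter

lemma Efun_neg (z : ℝ) : Efun (-z) = -Efun z := by
  have h := intervalIntegral.integral_comp_neg (a := 0) (b := z) fun t : ℝ => rexp (-π * t ^ 2)
  simp only [neg_zero, neg_sq] at h
  rw [Efun, Efun, h, intervalIntegral.integral_symm, mul_neg]

lemma integrable_exp_neg_pi_mul_sq : Integrable fun t : ℝ => rexp (-π * t ^ 2) :=
  integrable_exp_neg_mul_sq pi_pos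

lemma one_sub_Efun (z : ℝ) : 1 - Efun z = 2 * ∫ t in Ioi z, rexp (-π * t ^ 2) := by
  have half : ∫ t in Ioi (0 : ℝ), rexp (-π * t ^ 2) = 1 / 2 := by
    rw [integral_gaussian_Ioi, div_self pi_ne_zero, Real.sqrt_one]
  rw [Efun, ← intervalIntegral.integral_Ioi_sub_Ioi' integrable_exp_neg_pi_mul_sq.integrableOn
    integrable_exp_neg_pi_mul_sq.integrableOn, half]
  ring

lemma integral_Ioi_exp_neg_pi_mul_sq_le {z : ℝ} (hz : 0 ≤ z) :
    ∫ t in Ioi z, rexp (-π * t ^ 2) ≤ rexp (-π * z ^ 2) / 2 := by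
  have shift := (measurePreserving_add_right volume z).setIntegral_preimage_emb
    (measurableEmbedding_addRight z) (fun t : ℝ => rexp (-π * t ^ 2)) (Ioi z)
  rw [preimage_add_const_Ioi, sub_self] at shift
  -- `(s + z)² ≥ s² + z²` for `s, z ≥ 0`
  have pointwise : ∀ s ∈ Ioi (0 : ℝ),
      rexp (-π * (s + z) ^ 2) ≤ rexp (-π * z ^ 2) * rexp (-π * s ^ 2) := by
    intro s hs
    rw [← Real.exp_add, Real.exp_le_exp]
    nlinarith [mul_nonneg pi_pos.le (mul_nonneg (le_of_lt hs) hz)]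
  calc ∫ t in Ioi z, rexp (-π * t ^ 2)
      = ∫ s in Ioi 0, rexp (-π * (s + z) ^ 2) := shift.symm
    _ ≤ ∫ s in Ioi 0, rexp (-π * z ^ 2) * rexp (-π * s ^ 2) :=
        setIntegral_mono_on (integrable_exp_neg_pi_mul_sq.comp_add_right z).integrableOn
          (integrable_exp_neg_pi_mul_sq.const_mul _).integrableOn measurableSet_Ioi pointwise
    _ = rexp (-π * z ^ 2) / 2 := by
        rw [integral_const_mul, integral_gaussian_Ioi, div_self pi_ne_zero, Real.sqrt_one]
        ring

lemma abs_one_sub_Efun_le {z : ℝ} (hz : 0 ≤ z) : |1 - Efun z| ≤ rexp (-π * z ^ 2) := by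
  have nonneg : 0 ≤ ∫ t in Ioi z, rexp (-π * t ^ 2) :=
    setIntegral_nonneg measurableSet_Ioi fun t _ => (Real.exp_pos _).le
  rw [one_sub_Efun, abs_of_nonneg (by positivity)]
  linarith [integral_Ioi_exp_neg_pi_mul_sq_le hz]

section Rterm

variable {k : ℤ} {τ u : ℂ}

lemma sign_intCast_add_half (n : ℤ) :
    Real.sign ((n : ℝ) + 1 / 2) = if 0 ≤ n then 1 else -1 := by
  split_ifs with hn
  · exact Real.sign_of_pos (by positivity)
  · have : (n : ℝ) ≤ -1 := by exact_mod_cast (by omega : n ≤ -1)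
    exact Real.sign_of_neg (by linarith)

lemma abs_sign_sub_Efun_le {n : ℤ} {x : ℝ} (h : 0 ≤ n ∧ 0 ≤ x ∨ n < 0 ∧ x ≤ 0) :
    |Real.sign ((n : ℝ) + 1 / 2) - Efun x| ≤ rexp (-π * x ^ 2) := by
  rw [sign_intCast_add_half]
  rcases h with ⟨hn, hx⟩ | ⟨hn, hx⟩
  · rw [if_pos hn]
    exact abs_one_sub_Efun_le hx
  · rw [if_neg (by omega), ← abs_neg, show -(-1 - Efun x) = 1 - Efun (-x) by rw [Efun_neg]; ring]
    simpa only [neg_sq] using abs_one_sub_Efun_le (neg_nonneg.mpr hx)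

lemma Rterm_eq_mul_jacobiTheta₂_term (n : ℤ) :
    Rterm k τ u n = ((Real.sign ((n : ℝ) + 1 / 2) -
        Efun (((n : ℝ) + k * u.im / τ.im) * √(τ.im / k)) : ℝ) : ℂ) *
      jacobiTheta₂_term n (-u / 2) (-τ / (2 * k)) := by
  rw [Rterm, jacobiTheta₂_term]
  congr 2
  ring

lemma im_div_two_mul_intCast (z : ℂ) : (z / (2 * k)).im = z.im / (2 * k) := by
  rw [show (2 * (k : ℂ)) = ((2 * k : ℝ) : ℂ) by push_cast; ring, div_ofReal_im]

lemma norm_Rterm_le (hk : 0 < k) (hτ : 0 < τ.im) {n : ℤ}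
    (h : 0 ≤ n ∧ 0 ≤ (n : ℝ) + k * u.im / τ.im ∨ n < 0 ∧ (n : ℝ) + k * u.im / τ.im ≤ 0) :
    ‖Rterm k τ u n‖ ≤
      rexp (-π * k * u.im ^ 2 / τ.im) * ‖jacobiTheta₂_term n (u / 2) (τ / (2 * k))‖ := by
  set x := ((n : ℝ) + k * u.im / τ.im) * √(τ.im / k) with hx
  have hsign : 0 ≤ n ∧ 0 ≤ x ∨ n < 0 ∧ x ≤ 0 := by
    rcases h with ⟨hn, h⟩ | ⟨hn, h⟩
    · exact Or.inl ⟨hn, mul_nonneg h (sqrt_nonneg _)⟩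
    · exact Or.inr ⟨hn, mul_nonpos_of_nonpos_of_nonneg h (sqrt_nonneg _)⟩
  have hkR : (0 : ℝ) < k := by exact_mod_cast hk
  have hx2 : x ^ 2 = ((n : ℝ) + k * u.im / τ.im) ^ 2 * (τ.im / k) := by
    rw [hx, mul_pow, sq_sqrt (by positivity)]
  rw [Rterm_eq_mul_jacobiTheta₂_term, norm_mul, Complex.norm_real, Real.norm_eq_abs,
    norm_jacobiTheta₂_term, norm_jacobiTheta₂_term]
  simp only [neg_div, neg_im, im_div_two_mul_intCast, div_ofNat_im]
  calc _ ≤ rexp (-π * x ^ 2) *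
        rexp (-π * n ^ 2 * -(τ.im / (2 * k)) - 2 * π * n * -(u.im / 2)) :=
        mul_le_mul_of_nonneg_right (abs_sign_sub_Efun_le hsign) (exp_nonneg _)
    _ = _ := by
        rw [← Real.exp_add, ← Real.exp_add, hx2]
        congr 1
        field_simp
        ring

lemma summable_Rterm (hk : 0 < k) (hτ : 0 < τ.im) : Summable (Rterm k τ u) := by
  have hθ : Summable fun n : ℤ => ‖jacobiTheta₂_term n (u / 2) (τ / (2 * k))‖ := by
    refine ((summable_jacobiTheta₂_term_iff _ _).mpr ?_).norm
    rw [im_div_two_mul_intCast]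
    have : (0 : ℝ) < k := by exact_mod_cast hk
    positivity
  refine Summable.of_norm_bounded_eventually (hθ.mul_left (rexp (-π * k * u.im ^ 2 / τ.im))) ?_
  rw [Int.cofinite_eq, eventually_sup]
  constructor
  · filter_upwards [eventually_lt_atBot 0,
      (eventually_le_atBot (-(k * u.im / τ.im))).intCast_atBot] with n hn hna
    exact norm_Rterm_le hk hτ (Or.inr ⟨hn, by linarith⟩)
  · filter_upwards [eventually_ge_atTop 0,
      (eventually_ge_atTop (-(k * u.im / τ.im))).intCast_atTop] with n hn hna
    exact norm_Rterm_le hk hτ (Or.inl ⟨hn, by linarith⟩)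

lemma summable_Rterm_add_two_mul (hk : 0 < k) (hτ : 0 < τ.im) (j : ℤ) :
    Summable fun m : ℤ => Rterm k τ u (j + 2 * k * m) :=
  (summable_Rterm hk hτ).comp_injective fun m m' h => by simpa [hk.ne'] using h

lemma Rterm_neg {n : ℤ} (hn : n ≠ 0) : Rterm k τ (-u) n = -Rterm k τ u (-n) := by
  have hsign : Real.sign ((n : ℝ) + 1 / 2) = -Real.sign (((-n : ℤ) : ℝ) + 1 / 2) := by
    rw [sign_intCast_add_half, sign_intCast_add_half]
    split_ifs <;> first | omega | norm_num
  have harg : ((n : ℝ) + k * (-u).im / τ.im) * √(τ.im / k) =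
      -((((-n : ℤ) : ℝ) + k * u.im / τ.im) * √(τ.im / k)) := by
    push_cast
    rw [neg_im]
    ring
  rw [Rterm, Rterm, harg, Efun_neg, hsign, ← neg_mul]
  congr 1
  · push_cast
    ring
  · congr 1
    push_cast
    ring

lemma Rterm_add_one (n : ℤ) : Rterm k τ (u + 1) n = (-1) ^ n * Rterm k τ u n := by
  have hsign : cexp (n * (-π * I)) = (-1) ^ n := by
    rw [exp_int_mul, neg_mul, Complex.exp_neg, exp_pi_mul_I, inv_neg_one]
  rw [Rterm, Rterm, add_im, one_im, add_zero, mul_left_comm, ← hsign, ← Complex.exp_add]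
  congr 2
  ring

lemma Rterm_sub_mul_Rterm_add_tau (hk : 0 < k) (hτ : τ.im ≠ 0) (n : ℤ) :
    Rterm k τ u n - cexp (-π * I * k * u - π * I * k * τ / 2) * Rterm k τ (u + τ) (n - k) =
      if 0 ≤ n ∧ n < k then 2 * cexp (-π * I * n ^ 2 * τ / (2 * k) - π * I * n * u) else 0 := by
  have hkC : (k : ℂ) ≠ 0 := by exact_mod_cast hk.ne'
  have harg : ((n - k : ℤ) : ℝ) + k * (u + τ).im / τ.im = (n : ℝ) + k * u.im / τ.im := by
    push_cast
    rw [add_im]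
    field_simp
    ring
  have hexp : cexp (-π * I * k * u - π * I * k * τ / 2) *
      cexp (-π * I * ((n - k : ℤ) : ℂ) ^ 2 * τ / (2 * k) - π * I * ((n - k : ℤ) : ℂ) * (u + τ)) =
      cexp (-π * I * n ^ 2 * τ / (2 * k) - π * I * n * u) := by
    rw [← Complex.exp_add]
    congr 1
    push_cast
    field_simp
    ring
  rw [Rterm, Rterm, harg, mul_left_comm, hexp, ← sub_mul, ← ofReal_sub, sub_sub_sub_cancel_right,
    sign_intCast_add_half, sign_intCast_add_half]
  split_ifs <;> first | omega | norm_num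

end Rterm

section Rhat

variable {k : ℤ} {τ u : ℂ}

lemma Rhat_neg {r : ℤ} (hr : ¬2 * k ∣ r) : Rhat k r τ (-u) = Rhat k r τ u := by
  have key : ∀ j : ℤ, ¬2 * k ∣ j →
      ∑' m : ℤ, Rterm k τ (-u) (j + 2 * k * m) = -∑' m : ℤ, Rterm k τ u (-j + 2 * k * m) := by
    intro j hj
    rw [← tsum_neg, ← tsum_comp_neg fun m => -Rterm k τ u (-j + 2 * k * m)]
    refine tsum_congr fun m => ?_
    rw [Rterm_neg fun h => hj ⟨-m, by linarith⟩]
    congr 2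
    ring
  rw [Rhat, Rhat, key r hr, key (-r) (by rwa [Int.dvd_neg]), neg_neg]
  ring

lemma Rhat_add_one (r : ℤ) : Rhat k r τ (u + 1) = (-1) ^ r * Rhat k r τ u := by
  have key : ∀ j : ℤ, ∑' m : ℤ, Rterm k τ (u + 1) (j + 2 * k * m) =
      (-1) ^ j * ∑' m : ℤ, Rterm k τ u (j + 2 * k * m) := by
    intro j
    rw [← tsum_mul_left]
    refine tsum_congr fun m => ?_
    rw [Rterm_add_one, zpow_add₀ (by norm_num),
      Even.neg_one_zpow (n := 2 * k * m) ⟨k * m, by ring⟩, mul_one]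
  rw [Rhat, Rhat, key, key, _root_.zpow_neg, ← _root_.inv_zpow, inv_neg_one, mul_sub]

lemma mul_Rhat_add_tau (P : ℂ) (r : ℤ) :
    P * Rhat k (k - r) τ (u + τ) =
      ∑' m : ℤ, P * Rterm k τ (u + τ) (-r + 2 * k * m - k) -
        ∑' m : ℤ, P * Rterm k τ (u + τ) (r + 2 * k * m - k) := by
  rw [Rhat, mul_sub, ← tsum_mul_left, ← tsum_mul_left,
    ← (Equiv.addRight (1 : ℤ)).tsum_eq fun m => P * Rterm k τ (u + τ) (-r + 2 * k * m - k)]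
  congr 1
  · refine tsum_congr fun m => ?_
    rw [Equiv.coe_addRight]
    ring_nf
  · refine tsum_congr fun m => ?_
    ring_nf

lemma Rhat_add_mul_Rhat_add_tau (hτ : 0 < τ.im) {r : ℤ} (hr1 : 1 ≤ r) (hr2 : r ≤ k - 1) :
    Rhat k r τ u + cexp (-π * I * k * u - π * I * k * τ / 2) * Rhat k (k - r) τ (u + τ) =
      2 * cexp (-π * I * r * u - π * I * r ^ 2 * τ / (2 * k)) := by
  have hk : 0 < k := by omega
  set P := cexp (-π * I * k * u - π * I * k * τ / 2)
  set D : ℤ → ℂ := fun n =>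
    if 0 ≤ n ∧ n < k then 2 * cexp (-π * I * n ^ 2 * τ / (2 * k) - π * I * n * u) else 0
  have hdiff : ∀ j : ℤ, ∑' m : ℤ, Rterm k τ u (j + 2 * k * m) -
      ∑' m : ℤ, P * Rterm k τ (u + τ) (j + 2 * k * m - k) = ∑' m : ℤ, D (j + 2 * k * m) := by
    intro j
    have hshifted : Summable fun m : ℤ => P * Rterm k τ (u + τ) (j + 2 * k * m - k) :=
      ((summable_Rterm_add_two_mul hk hτ (j - k)).mul_left P).congr fun m => by ring_nf
    rw [← (summable_Rterm_add_two_mul hk hτ j).tsum_sub hshifted]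
    exact tsum_congr fun m => Rterm_sub_mul_Rterm_add_tau hk hτ.ne' _
  -- `0 ≤ n < k` meets `r + 2kℤ` only at `n = r`, and misses `-r + 2kℤ`
  have hpos : ∑' m : ℤ, D (r + 2 * k * m) = D r := by
    rw [tsum_eq_single 0 fun m hm => if_neg ?_, mul_zero, add_zero]
    rintro ⟨hnonneg, hlt⟩
    rcases lt_or_gt_of_ne hm with hm | hm <;> nlinarith
  have hneg : ∑' m : ℤ, D (-r + 2 * k * m) = 0 := by
    refine (tsum_congr fun m => if_neg ?_).trans tsum_zero
    rintro ⟨hnonneg, hlt⟩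
    rcases le_or_gt m 0 with hm | hm <;> nlinarith
  rw [mul_Rhat_add_tau, Rhat]
  calc _ = ∑' m : ℤ, D (r + 2 * k * m) - ∑' m : ℤ, D (-r + 2 * k * m) := by
        rw [← hdiff, ← hdiff]
        ring
    _ = _ := by
        rw [hpos, hneg, sub_zero, show D r = _ from if_pos ⟨by omega, by omega⟩]
        ring_nf

end Rhat

theorem Rhat_elliptic_general (k : ℤ) (r : ℤ) (hr1 : 1 ≤ r) (hr2 : r ≤ k - 1)
    (τ : ℂ) (hτ : 0 < τ.im) (u : ℂ) :
    Rhat k r τ u = Rhat k r τ (-u) ∧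
    Rhat k r τ u + (-1 : ℂ) ^ (r + 1) * Rhat k r τ (u + 1) = 0 ∧
    Rhat k r τ u +
        Complex.exp (-(Real.pi : ℂ) * Complex.I * (k : ℂ) * u -
            (Real.pi : ℂ) * Complex.I * (k : ℂ) * τ / 2) *
          Rhat k (k - r) τ (u + τ) =
      2 * Complex.exp (-(Real.pi : ℂ) * Complex.I * (r : ℂ) * u -
        (Real.pi : ℂ) * Complex.I * (r : ℂ) ^ 2 * τ / (2 * (k : ℂ))) := by
  refine ⟨(Rhat_neg fun h => ?_).symm, ?_, Rhat_add_mul_Rhat_add_tau hτ hr1 hr2⟩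
  · have := Int.le_of_dvd (by omega) h
    omega
  · rw [Rhat_add_one, ← mul_assoc, ← zpow_add₀ (by norm_num), Odd.neg_one_zpow ⟨r, by ring⟩]
    ring

/-- Proposition: elliptic properties of R̂_{k,r}. -/
theorem Rhat_elliptic (k : ℤ) (hk : 2 ≤ k) (r : ℤ) (hr1 : 1 ≤ r) (hr2 : r ≤ k - 1)
    (τ : ℂ) (hτ : 0 < τ.im) (u : ℂ) :
    Rhat k r τ u = Rhat k r τ (-u) ∧
    Rhat k r τ u + (-1 : ℂ) ^ (r + 1) * Rhat k r τ (u + 1) = 0 ∧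
    Rhat k r τ u +
        Complex.exp (-(Real.pi : ℂ) * Complex.I * (k : ℂ) * u -
            (Real.pi : ℂ) * Complex.I * (k : ℂ) * τ / 2) *
          Rhat k (k - r) τ (u + τ) =
      2 * Complex.exp (-(Real.pi : ℂ) * Complex.I * (r : ℂ) * u -
        (Real.pi : ℂ) * Complex.I * (r : ℂ) ^ 2 * τ / (2 * (k : ℂ))) :=
  Rhat_elliptic_general k r hr1 hr2 τ hτ u

end DSLST
end
end
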